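/- Let φ : (R₀,∞) → (0,∞) be non-decreasing and unbounded, let μ > 0, and let (d_n) be a sequence of complex numbers with |d_n| → ∞ such that ∑_n 1/φ(|d_n|)^μ < ∞. Then the set E = ⋃_n [ |d_n| − |d_n|·φ(|d_n|+3)^{−μ}, |d_n| + |d_n|·φ(|d_n|+3)^{−μ} ] has finite logarithmic measure, i.e. ∫_{E∩[1,∞)} dt/t < ∞. -/

import Mathlib

open Filter MeasureTheory Topology Asymptotics
open scoped Classical

noncomputable section

/-- The positive part `log⁺` of the logarithm. -/
def logPlus (x : ℝ) : ℝ := max (Real.log x) 0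

/-- The Nevanlinna proximity function `m(r, f)`. -/
def nevm (f : ℂ → ℂ) (r : ℝ) : ℝ :=
  (2 * Real.pi)⁻¹ * ∫ θ in (0:ℝ)..(2 * Real.pi),
    logPlus (‖f ((r : ℂ) * Complex.exp ((θ : ℂ) * Complex.I))‖)

/-- The multiplicity of a pole of `f` at `z` (0 if `z` is not a pole). -/
def poleMult (f : ℂ → ℂ) (z : ℂ) : ℕ :=
  if h : MeromorphicAt f z then (-(WithTop.untopD 0 (meromorphicOrderAt f z))).toNat else 0

/-- The unintegrated counting function `n(t, f)` of the poles of `f` in `|z| ≤ t`,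
counted with multiplicity. -/
def nevn (f : ℂ → ℂ) (t : ℝ) : ℝ :=
  ∑' z : {z : ℂ // ‖z‖ ≤ t}, (poleMult f z.1 : ℝ)

/-- The integrated Nevanlinna counting function `N(r, f)` of the poles of `f`. -/
def nevN (f : ℂ → ℂ) (r : ℝ) : ℝ :=
  (∫ t in Set.Ioc (0:ℝ) r, (nevn f t - nevn f 0) / t) + nevn f 0 * Real.log r

/-- The Nevanlinna characteristic `T(r, f)`. -/
def nevT (f : ℂ → ℂ) (r : ℝ) : ℝ := nevm f r + nevN f r

/-- The integrated counting function `N(r, a, g)` of the `a`-points of `g`,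
where `a ∈ ℂ ∪ {∞}` (`none` denotes `∞`). -/
def nevNa (g : ℂ → ℂ) (a : Option ℂ) (r : ℝ) : ℝ :=
  match a with
  | none => nevN g r
  | some a => nevN (fun z => (g z - a)⁻¹) r

/-- The `φ`-order `ρ_φ(f) = limsup_{r → ∞} log T(r,f) / log φ(r)` of a meromorphic function. -/
def phiOrder (φ : ℝ → ℝ) (f : ℂ → ℂ) : EReal :=
  Filter.limsup (fun r : ℝ => ((Real.log (nevT f r) / Real.log (φ r) : ℝ) : EReal)) Filter.atTop

/-- The constant `α_{φ,s} = liminf_{r → ∞} log φ(r) / log φ(s(r))`. -/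
def alphaPS (φ s : ℝ → ℝ) : ℝ :=
  Filter.liminf (fun r : ℝ => Real.log (φ r) / Real.log (φ (s r))) Filter.atTop

/-- The constant `γ_{φ,s} = liminf_{r → ∞} log log (s(r)/r) / log φ(r)`. -/
def gammaPS (φ s : ℝ → ℝ) : ℝ :=
  Filter.liminf (fun r : ℝ => Real.log (Real.log (s r / r)) / Real.log (φ r)) Filter.atTop

/-- The branch `z = x + √(x² - 1)`. -/
def awZ (x : ℂ) : ℂ := x + (x ^ 2 - 1) ^ (1/2 : ℂ)

/-- `x̂ = (q^{1/2} z + q^{-1/2} z⁻¹)/2`. -/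
def awHat (q x : ℂ) : ℂ := (q ^ (1/2 : ℂ) * awZ x + q ^ (-(1/2) : ℂ) / awZ x) / 2

/-- `x̌ = (q^{-1/2} z + q^{1/2} z⁻¹)/2`. -/
def awCheck (q x : ℂ) : ℂ := (q ^ (-(1/2) : ℂ) * awZ x + q ^ (1/2 : ℂ) / awZ x) / 2

/-- The Askey–Wilson divided difference operator `𝒟_q`. -/
def awOp (q : ℂ) (f : ℂ → ℂ) (x : ℂ) : ℂ :=
  if x = 1 ∨ x = -1 then deriv f (x * (q ^ (1/2 : ℂ) + q ^ (-(1/2) : ℂ)) / 2)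
  else (f (awHat q x) - f (awCheck q x)) / (awHat q x - awCheck q x)

/-- The maximum modulus `M(r, f)`. -/
def maxMod (f : ℂ → ℂ) (r : ℝ) : ℝ :=
  sSup ((fun z => ‖f z‖) '' Metric.sphere (0:ℂ) r)

set_option maxHeartbeats 1000000 in
theorem stmt_18
    (R₀ : ℝ) (hR₀ : 0 < R₀) (φ : ℝ → ℝ)
    (hφ_pos : ∀ r : ℝ, R₀ < r → 0 < φ r)
    (hφ_mono : ∀ ⦃u v : ℝ⦄, R₀ < u → u ≤ v → φ u ≤ φ v)
    (hφ_unb : Filter.Tendsto φ Filter.atTop Filter.atTop)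
    (μ : ℝ) (hμ : 0 < μ) (d : ℕ → ℂ)
    (hd : Filter.Tendsto (fun n : ℕ => ‖d n‖) Filter.atTop Filter.atTop)
    (hsum : Summable (fun n : ℕ => 1 / φ (‖d n‖) ^ μ)) :
    (∫⁻ t in (⋃ n : ℕ,
        Set.Icc (‖d n‖ - ‖d n‖ * φ (‖d n‖ + 3) ^ (-μ))
          (‖d n‖ + ‖d n‖ * φ (‖d n‖ + 3) ^ (-μ)))
        ∩ Set.Ici (1:ℝ),
      ENNReal.ofReal (1 / t)) < ⊤ := by
  classical
  set a : ℕ → ℝ := fun n => ‖d n‖ with ha_def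
  have hIcc :
      (⋃ n : ℕ,
        Set.Icc (‖d n‖ - ‖d n‖ * φ (‖d n‖ + 3) ^ (-μ))
          (‖d n‖ + ‖d n‖ * φ (‖d n‖ + 3) ^ (-μ)))
        ∩ Set.Ici (1:ℝ)
      = ⋃ n : ℕ,
          (Set.Icc (a n - a n * φ (a n + 3) ^ (-μ)) (a n + a n * φ (a n + 3) ^ (-μ))
            ∩ Set.Ici (1:ℝ)) := by
    rw [Set.iUnion_inter]
  rw [hIcc]
  set S : ℕ → Set ℝ := fun n =>
    Set.Icc (a n - a n * φ (a n + 3) ^ (-μ)) (a n + a n * φ (a n + 3) ^ (-μ))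
      ∩ Set.Ici (1:ℝ) with hS_def
  have hSmeas : ∀ n, MeasurableSet (S n) := fun n =>
    (measurableSet_Icc.inter measurableSet_Ici)
  refine lt_of_le_of_lt (lintegral_iUnion_le _ _) ?_
  -- the integral over each S n
  set I : ℕ → ENNReal := fun n => ∫⁻ t in S n, ENNReal.ofReal (1 / t) with hI_def
  -- each I n is finite
  have hI_lt : ∀ n, I n < ⊤ := by
    intro n
    have h1 : I n ≤ ∫⁻ _ in S n, (1 : ENNReal) := by
      refine setLIntegral_mono' (hSmeas n) (fun t ht => ?_)
      have ht1 : (1:ℝ) ≤ t := ht.2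
      have : (1:ℝ) / t ≤ 1 := by
        rw [div_le_one (by linarith)]; linarith
      simpa using ENNReal.ofReal_le_one.mpr this
    have h2 : (∫⁻ _ in S n, (1 : ENNReal)) = volume (S n) := by
      simp
    have h3 : volume (S n) < ⊤ := by
      refine lt_of_le_of_lt (measure_mono Set.inter_subset_left) ?_
      rw [Real.volume_Icc]
      exact ENNReal.ofReal_lt_top
    calc I n ≤ volume (S n) := h2 ▸ h1
      _ < ⊤ := h3
  -- eventual bounds
  have c_pos : (0:ℝ) < (2:ℝ) ^ (1/μ) := Real.rpow_pos_of_pos (by norm_num) _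
  have hev : ∀ᶠ n in Filter.atTop,
      (2 ≤ a n ∧ R₀ + 1 ≤ a n) ∧ (2:ℝ) ^ (1/μ) ≤ φ (a n + 3) := by
    have h1 := hd.eventually_ge_atTop (max 2 (R₀ + 1))
    have h2 : Filter.Tendsto (fun n => a n + 3) Filter.atTop Filter.atTop :=
      Filter.tendsto_atTop_add_const_right _ 3 hd
    have h3 := (hφ_unb.comp h2).eventually_ge_atTop ((2:ℝ) ^ (1/μ))
    filter_upwards [h1, h3] with n hn1 hn3
    exact ⟨⟨le_trans (le_max_left _ _) hn1, le_trans (le_max_right _ _) hn1⟩, hn3⟩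
  obtain ⟨N, hN⟩ := Filter.eventually_atTop.mp hev
  -- tail bound
  have htail : ∀ n, N ≤ n → I n ≤ ENNReal.ofReal (4 * (1 / φ (a n) ^ μ)) := by
    intro n hn
    obtain ⟨⟨ha2, haR⟩, hc⟩ := hN n hn
    have haR0 : R₀ < a n := by linarith
    have haR0' : R₀ < a n + 3 := by linarith
    have hφa : 0 < φ (a n) := hφ_pos _ haR0
    have hφa3 : 0 < φ (a n + 3) := hφ_pos _ haR0'
    set ε : ℝ := φ (a n + 3) ^ (-μ) with hε_def
    have hεpos : 0 < ε := Real.rpow_pos_of_pos hφa3 _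
    have hε_eq : ε = (φ (a n + 3) ^ μ)⁻¹ := by
      rw [hε_def, Real.rpow_neg hφa3.le]
    have hφμ2 : (2:ℝ) ≤ φ (a n + 3) ^ μ := by
      have := Real.rpow_le_rpow c_pos.le hc hμ.le
      rwa [← Real.rpow_mul (by norm_num : (0:ℝ) ≤ 2),
        one_div_mul_cancel hμ.ne', Real.rpow_one] at this
    have hε2 : ε ≤ 1/2 := by
      rw [hε_eq]
      rw [inv_le_comm₀ (by positivity) (by norm_num)]
      simpa using hφμ2
    have hapos : (0:ℝ) < a n := by linarith
    have hlo : a n / 2 ≤ a n - a n * ε := by nlinarith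
    have h1 : I n ≤ ∫⁻ _ in S n, ENNReal.ofReal (2 / a n) := by
      refine setLIntegral_mono' (hSmeas n) (fun t ht => ?_)
      refine ENNReal.ofReal_le_ofReal ?_
      have ht1 : (1:ℝ) ≤ t := ht.2
      have htlo : a n - a n * ε ≤ t := ht.1.1
      rw [div_le_div_iff₀ (by linarith) hapos]
      nlinarith
    have h2 : (∫⁻ _ in S n, ENNReal.ofReal (2 / a n)) =
        ENNReal.ofReal (2 / a n) * volume (S n) := by
      simp [setLIntegral_const]
    have h3 : volume (S n) ≤ ENNReal.ofReal (2 * (a n * ε)) := by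
      refine le_trans (measure_mono Set.inter_subset_left) ?_
      rw [Real.volume_Icc]
      exact ENNReal.ofReal_le_ofReal (by linarith)
    have h4 : ENNReal.ofReal (2 / a n) * ENNReal.ofReal (2 * (a n * ε)) =
        ENNReal.ofReal (4 * ε) := by
      rw [← ENNReal.ofReal_mul (by positivity)]
      congr 1
      field_simp
      ring
    have h5 : (4:ℝ) * ε ≤ 4 * (1 / φ (a n) ^ μ) := by
      have hmono : φ (a n) ^ μ ≤ φ (a n + 3) ^ μ :=
        Real.rpow_le_rpow hφa.le (hφ_mono haR0 (by linarith)) hμ.le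
      have : ε ≤ 1 / φ (a n) ^ μ := by
        rw [hε_eq, one_div]
        exact inv_anti₀ (by positivity) hmono
      linarith
    calc I n ≤ ENNReal.ofReal (2 / a n) * volume (S n) := h2 ▸ h1
      _ ≤ ENNReal.ofReal (2 / a n) * ENNReal.ofReal (2 * (a n * ε)) :=
          mul_le_mul_right h3 _
      _ = ENNReal.ofReal (4 * ε) := h4
      _ ≤ ENNReal.ofReal (4 * (1 / φ (a n) ^ μ)) := ENNReal.ofReal_le_ofReal h5
  -- split the sum
  rw [← Summable.sum_add_tsum_nat_add' (f := I) (k := N) ENNReal.summable]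
  refine ENNReal.add_lt_top.mpr ⟨?_, ?_⟩
  · exact ENNReal.sum_lt_top.mpr fun i _ => hI_lt i
  · have hsum4 : Summable (fun n : ℕ => 4 * (1 / φ (a n) ^ μ)) := hsum.mul_left 4
    have hsum4' : Summable (fun n : ℕ => 4 * (1 / φ (a (n + N)) ^ μ)) :=
      (summable_nat_add_iff N).mpr hsum4
    calc (∑' n : ℕ, I (n + N))
        ≤ ∑' n : ℕ, ENNReal.ofReal (4 * (1 / φ (a (n + N)) ^ μ)) :=
          ENNReal.tsum_le_tsum fun n => htail _ (Nat.le_add_left N n)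
      _ = ENNReal.ofReal (∑' n : ℕ, 4 * (1 / φ (a (n + N)) ^ μ)) :=
          (ENNReal.ofReal_tsum_of_nonneg (fun n => by
            have h := hN (n + N) (Nat.le_add_left N n)
            have hp : 0 < φ (a (n + N)) := hφ_pos _ (by linarith [h.1.2])
            positivity) hsum4').symm
      _ < ⊤ := ENNReal.ofReal_lt_top
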